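/- Suppose λ, μ ∈ (0,1] satisfy 1 + ln(λ)φ(λ) = 0 and 1 + ln(μ)φ(μ) = 0, where φ : (0,1] → ℝ satisfies cε² ≤ φ ≤ Cε² and |φ(λ) - φ(μ)| ≤ C|λ ln λ - μ ln μ| for constants 0 < c ≤ C independent of ε. Then for ε sufficiently small, λ = μ; i.e., the equation 1 + ln(λ)φ(λ) = 0 has at most one solution. -/

import Mathlib

/-!
A root `t` of `1 + log t * φ t = 0` has `φ t = (-log t)⁻¹`, so `cε² ≤ φ ≤ Cε²` puts `-log t`
in `[(Cε²)⁻¹, (cε²)⁻¹]`: roots are exponentially small. For two roots `s < t`, the difference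
`|φ s - φ t| = (log t - log s) / (log s * log t)` is at least `(t - s) / (t * log s * log t)`,
while `u ↦ u log u` has slope at most `1 - log t` on `[s, t]`. The Lipschitz condition then
gives `1 ≤ C (1 - log t) t log s log t ≤ (C² / c) (1 + M) M² e^{-M}` with
`M = -log t ≥ (Cε²)⁻¹`, which fails once `ε` is small.
-/

open Real Filter Topology

lemma sub_le_mul_log_sub_log {s t : ℝ} (hs : 0 < s) (ht : 0 < t) :
    t - s ≤ t * (log t - log s) := by
  have h := one_sub_inv_le_log_of_pos (div_pos ht hs)
  rw [inv_div, log_div ht.ne' hs.ne', sub_le_iff_le_add] at h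
  calc t - s = t * (1 - s / t) := by field_simp
    _ ≤ t * (log t - log s) := mul_le_mul_of_nonneg_left (by linarith) ht.le

lemma abs_mul_log_sub_mul_log_le {s t : ℝ} (hs : 0 < s) (hst : s ≤ t) (ht : t ≤ 1) :
    |t * log t - s * log s| ≤ (t - s) * (1 - log t) := by
  have hlog_t : log t ≤ 0 := log_nonpos (hs.trans_le hst).le ht
  have hlog_sub : s * (log t - log s) ≤ t - s := by
    linarith [sub_le_mul_log_sub_log (hs.trans_le hst) hs]
  have hlog_mono : 0 ≤ s * (log t - log s) :=
    mul_nonneg hs.le (sub_nonneg.2 (log_le_log hs hst))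
  have hsplit : t * log t - s * log s = (t - s) * log t + s * (log t - log s) := by ring
  rw [hsplit, abs_le]
  constructor <;> nlinarith [mul_nonpos_of_nonneg_of_nonpos (sub_nonneg.2 hst) hlog_t]

lemma eq_inv_neg_log_of_one_add_log_mul_eq_zero {t p : ℝ} (h : 1 + log t * p = 0) :
    p = (-log t)⁻¹ := by
  have hlog : log t ≠ 0 := by rintro hlog; simp [hlog] at h
  field_simp
  linarith

lemma neg_log_mem_Icc_of_one_add_log_mul_eq_zero {t p a b : ℝ} (ha : 0 < a)
    (h : 1 + log t * p = 0) (hp : a ≤ p ∧ p ≤ b) : b⁻¹ ≤ -log t ∧ -log t ≤ a⁻¹ := by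
  rw [eq_inv_neg_log_of_one_add_log_mul_eq_zero h] at hp
  have hpos : 0 < -log t := inv_pos.1 (ha.trans_le hp.1)
  exact ⟨(inv_le_comm₀ hpos (ha.trans_le (hp.1.trans hp.2))).1 hp.2,
    (le_inv_comm₀ ha hpos).1 hp.1⟩

lemma one_le_of_one_add_log_mul_eq_zero_of_lt {φ : ℝ → ℝ} {K s t : ℝ} (hs : 0 < s)
    (hst : s < t) (ht : t ≤ 1) (hLip : |φ s - φ t| ≤ K * |s * log s - t * log t|)
    (hφs : 1 + log s * φ s = 0) (hφt : 1 + log t * φ t = 0) :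
    1 ≤ K * (1 - log t) * t * (log s * log t) := by
  have ht0 : 0 < t := hs.trans hst
  have hlog_st : log s < log t := log_lt_log hs hst
  have hlog_t : log t < 0 := (log_nonpos ht0.le ht).lt_of_ne fun h0 => by simp [h0] at hφt
  have hlog_s : log s < 0 := hlog_st.trans hlog_t
  have hprod : 0 < log s * log t := mul_pos_of_neg_of_neg hlog_s hlog_t
  have hdiff : |φ s - φ t| = (log t - log s) / (log s * log t) := by
    have hφ : φ t - φ s = (log t - log s) / (log s * log t) := by
      rw [eq_inv_neg_log_of_one_add_log_mul_eq_zero hφs,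
        eq_inv_neg_log_of_one_add_log_mul_eq_zero hφt]
      field_simp [hlog_t.ne, hlog_s.ne]
      ring
    rw [abs_sub_comm, hφ, abs_of_pos (div_pos (sub_pos.2 hlog_st) hprod)]
  have hK : 0 ≤ K :=
    (pos_of_mul_pos_left ((hdiff ▸ div_pos (sub_pos.2 hlog_st) hprod).trans_le hLip)
      (abs_nonneg _)).le
  have hbound : (t - s) / (t * (log s * log t)) ≤ K * ((t - s) * (1 - log t)) :=
    calc (t - s) / (t * (log s * log t)) ≤ (log t - log s) / (log s * log t) := by
          rw [← div_div]; gcongr; rw [div_le_iff₀' ht0]; exact sub_le_mul_log_sub_log hs ht0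
      _ ≤ K * |s * log s - t * log t| := hdiff ▸ hLip
      _ ≤ K * ((t - s) * (1 - log t)) := by
          rw [abs_sub_comm]; gcongr; exact abs_mul_log_sub_mul_log_le hs hst.le ht
  rw [div_le_iff₀ (by positivity)] at hbound
  nlinarith [sub_pos.2 hst]

lemma eventually_mul_one_add_mul_sq_mul_exp_neg_lt_one (K : ℝ) :
    ∀ᶠ M in atTop, K * ((1 + M) * M ^ 2 * exp (-M)) < 1 := by
  have h : Tendsto (fun M => K * ((1 + M) * M ^ 2 * exp (-M))) atTop (𝓝 0) := by
    simpa using (((tendsto_pow_mul_exp_neg_atTop_nhds_zero 2).add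
      (tendsto_pow_mul_exp_neg_atTop_nhds_zero 3)).const_mul K).congr fun M => by ring
  exact h.eventually (gt_mem_nhds one_pos)

lemma tendsto_inv_mul_sq_nhdsGT_zero {C : ℝ} (hC : 0 < C) :
    Tendsto (fun ε : ℝ => (C * ε ^ 2)⁻¹) (𝓝[>] 0) atTop := by
  refine tendsto_inv_nhdsGT_zero.comp (tendsto_nhdsWithin_iff.2 ⟨?_, ?_⟩)
  · exact tendsto_nhdsWithin_of_tendsto_nhds
      ((continuous_const.mul (continuous_pow 2)).tendsto' (0 : ℝ) 0 (by simp))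
  · filter_upwards [self_mem_nhdsWithin] with ε (hε : 0 < ε)
    exact mul_pos hC (pow_pos hε 2)

/-- Uniqueness of the solution of `1 + ln(λ)φ(λ) = 0`: if `cε² ≤ φ ≤ Cε²` on `(0,1]`
and `|φ(λ) - φ(μ)| ≤ C |λ ln λ - μ ln μ|`, then for `ε` sufficiently small the equation
`1 + ln(λ)φ(λ) = 0` has at most one solution in `(0,1]`. -/
theorem unique_zero_one_add_log_mul (c C : ℝ) (hc : 0 < c) (hcC : c ≤ C) :
    ∃ ε₀ > 0, ∀ ε : ℝ, 0 < ε → ε ≤ ε₀ → ∀ φ : ℝ → ℝ,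
      (∀ t ∈ Set.Ioc (0 : ℝ) 1, c * ε ^ 2 ≤ φ t ∧ φ t ≤ C * ε ^ 2) →
      (∀ lam ∈ Set.Ioc (0 : ℝ) 1, ∀ mu ∈ Set.Ioc (0 : ℝ) 1,
        |φ lam - φ mu| ≤ C * |lam * Real.log lam - mu * Real.log mu|) →
      ∀ lam ∈ Set.Ioc (0 : ℝ) 1, ∀ mu ∈ Set.Ioc (0 : ℝ) 1,
        1 + Real.log lam * φ lam = 0 → 1 + Real.log mu * φ mu = 0 → lam = mu := by
  have hC : 0 < C := hc.trans_le hcC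
  obtain ⟨N, hN⟩ :=
    eventually_atTop.1 (eventually_mul_one_add_mul_sq_mul_exp_neg_lt_one (C ^ 2 / c))
  obtain ⟨ε₀, hε₀, hsmall⟩ := mem_nhdsGT_iff_exists_Ioc_subset.1
    ((tendsto_inv_mul_sq_nhdsGT_zero hC).eventually_ge_atTop N)
  refine ⟨ε₀, hε₀, fun ε hε hεle φ hφ hLip lam hlam mu hmu hl hm => ?_⟩
  by_contra hne
  wlog hlt : lam < mu generalizing lam mu
  · exact this mu hmu lam hlam hm hl (Ne.symm hne) ((not_lt.1 hlt).lt_of_ne (Ne.symm hne))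
  have key :=
    one_le_of_one_add_log_mul_eq_zero_of_lt hlam.1 hlt hmu.2 (hLip lam hlam mu hmu) hl hm
  obtain ⟨-, hL⟩ := neg_log_mem_Icc_of_one_add_log_mul_eq_zero (by positivity) hl (hφ lam hlam)
  obtain ⟨hM, -⟩ := neg_log_mem_Icc_of_one_add_log_mul_eq_zero (by positivity) hm (hφ mu hmu)
  set M := -log mu
  have hM0 : 0 < M := (inv_pos.2 (by positivity)).trans_le hM
  have hLM : -log lam ≤ C / c * M :=
    calc -log lam ≤ (c * ε ^ 2)⁻¹ := hL
      _ = C / c * (C * ε ^ 2)⁻¹ := by field_simp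
      _ ≤ C / c * M := by gcongr
  refine (hN M ((hsmall ⟨hε, hεle⟩).trans hM)).not_ge ?_
  calc 1 ≤ C * (1 - log mu) * mu * (log lam * log mu) := key
    _ = C * (1 + M) * exp (-M) * (-log lam * M) := by rw [neg_neg, exp_log hmu.1]; ring
    _ ≤ C * (1 + M) * exp (-M) * (C / c * M * M) := by gcongr
    _ = C ^ 2 / c * ((1 + M) * M ^ 2 * exp (-M)) := by field_simp
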